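/- arXiv:1604.03413 — 2 statements merged into one kernel-verified Lean document; each statement's English description precedes it below -/
import Mathlib

section
/- The bijection λ between the global active domains of two b-bounded extended runs with equal abstraction also intertwines the sequence numberings: the induced map β defined by β(seq_no_i(e)) = seq_no'_i(λ(e)) is well-defined, bijective between the ranges of the two numberings, and strictly monotone. -/
universe u v w

/-- A relational schema: a collection of relation names with arities. -/
structure Schema (Rel : Type u) where
  ar : Rel → ℕ

/-- A fact over a schema `S` and a carrier `C`: a relation name together with a
tuple of the correct arity. -/
abbrev DBFact {Rel : Type u} (S : Schema Rel) (C : Type w) := Σ R : Rel, Fin (S.ar R) → C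

/-- A database instance over schema `S` and carrier `C`: a set of facts. -/
abbrev DBInst {Rel : Type u} (S : Schema Rel) (C : Type w) := Set (DBFact S C)

/-- The active domain of a database instance. -/
def adom {Rel : Type u} {Δ : Type w} (S : Schema Rel) (I : DBInst S Δ) : Set Δ :=
  {e | ∃ fa ∈ I, ∃ i, fa.2 i = e}

/-- Substituting a substitution `σ` in a database instance over variables. -/
def substDB {Rel : Type u} {Var : Type v} {Δ : Type w} (S : Schema Rel)
    (σ : Var → Δ) (J : DBInst S Var) : DBInst S Δ :=
  (fun fa : DBFact S Var => (⟨fa.1, fun i => σ (fa.2 i)⟩ : DBFact S Δ)) '' J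

/-- A (guarded) DMS action: action parameters `ū`, fresh-input variables `v̄`
(listed in order), a guard (given semantically, as the satisfaction relation of
an `FOL(R)` query on an instance under a substitution), and variable-instances
`Del` and `Add`. -/
structure DMSAction {Rel : Type u} (S : Schema Rel) (Var : Type v) (Δ : Type w) where
  params : Set Var
  fresh : List Var
  guard : DBInst S Δ → (Var → Δ) → Prop
  Del : DBInst S Var
  Add : DBInst S Var

/-- The set of fresh-input variables of an action. -/
def freshSet {Rel : Type u} {Var : Type v} {Δ : Type w} {S : Schema Rel}
    (α : DMSAction S Var Δ) : Set Var := {v | v ∈ α.fresh}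

/-- Well-formedness: every variable occurring in `Add` is an action parameter or
a fresh-input variable. -/
def AddVarsOK {Rel : Type u} {Var : Type v} {Δ : Type w} {S : Schema Rel}
    (α : DMSAction S Var Δ) : Prop :=
  ∀ fa ∈ α.Add, ∀ k, fa.2 k ∈ α.params ∪ freshSet α

/-- Well-formedness: every fresh-input variable occurs in some fact of `Add`
(`v̄ ⊆ adom(Add)`). -/
def FreshInAdd {Rel : Type u} {Var : Type v} {Δ : Type w} {S : Schema Rel}
    (α : DMSAction S Var Δ) : Prop :=
  ∀ v ∈ α.fresh, ∃ fa ∈ α.Add, ∃ k, fa.2 k = v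

/-- The DMS transition relation `⟨I,H⟩ →^{α:σ} ⟨I',H'⟩`: `σ` is an instantiating
substitution for `α` at `⟨I,H⟩` (parameters into the active domain, fresh-input
variables injectively to history-fresh values, guard satisfied),
`I' = (I − σ(Del)) + σ(Add)` and `H' = H ∪ σ(v̄)`. -/
def Step {Rel : Type u} {Var : Type v} {Δ : Type w} (S : Schema Rel)
    (α : DMSAction S Var Δ) (σ : Var → Δ)
    (I : DBInst S Δ) (H : Set Δ) (I' : DBInst S Δ) (H' : Set Δ) : Prop :=
  (∀ u ∈ α.params, σ u ∈ adom S I) ∧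
  (∀ v ∈ α.fresh, σ v ∉ H) ∧
  Set.InjOn σ (freshSet α) ∧
  α.guard I σ ∧
  I' = (I \ substDB S σ α.Del) ∪ substDB S σ α.Add ∧
  H' = H ∪ σ '' freshSet α

/-- The elements of `D` that are more recent than `e` according to the sequence
numbering `sn`. -/
def recAbove {Δ : Type w} (D : Set Δ) (sn : Δ → ℕ) (e : Δ) : Set Δ :=
  {e' ∈ D | sn e < sn e'}

/-- The recency index of `e` in `D` wrt. `sn`: the number of elements of `D`
with strictly larger sequence number. -/
noncomputable def recIdx {Δ : Type w} (D : Set Δ) (sn : Δ → ℕ) (e : Δ) : ℕ :=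
  (recAbove D sn e).ncard

/-- The `b`-recent part of `D` wrt. `sn`: the elements of `D` above which fewer
than `b` elements of `D` sit (i.e. the `min(b,|D|)` most recent elements). -/
def bRecent {Δ : Type w} (D : Set Δ) (sn : Δ → ℕ) (b : ℕ) : Set Δ :=
  {e ∈ D | (recAbove D sn e).Finite ∧ (recAbove D sn e).ncard < b}

/-- The `b`-bounded transition relation on extended configurations
`⟨I, H, seq_no⟩`: an ordinary transition in which all action-parameter values
lie among the `b` most recent elements of `adom I`, and where the sequence
numbering is injectively extended so that fresh elements get numbers larger
than everything in the history, ordered by their appearance among the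
fresh-input variables. -/
def BStep {Rel : Type u} {Var : Type v} {Δ : Type w} (S : Schema Rel) (b : ℕ)
    (α : DMSAction S Var Δ) (σ : Var → Δ)
    (I : DBInst S Δ) (H : Set Δ) (sn : Δ → ℕ)
    (I' : DBInst S Δ) (H' : Set Δ) (sn' : Δ → ℕ) : Prop :=
  Step S α σ I H I' H' ∧
  (∀ u ∈ α.params, σ u ∈ bRecent (adom S I) sn b) ∧
  Set.InjOn sn' H' ∧
  (∀ e ∈ H, sn' e = sn e) ∧
  (∀ v ∈ α.fresh, ∀ e ∈ H, sn e < sn' (σ v)) ∧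
  (∀ i j : Fin α.fresh.length, i < j →
    sn' (σ (α.fresh.get i)) < sn' (σ (α.fresh.get j)))

/-- A database-manipulating system: an initial instance and a set of actions. -/
structure DMS {Rel : Type u} (S : Schema Rel) (Var : Type v) (Δ : Type w) where
  I0 : DBInst S Δ
  acts : Set (DMSAction S Var Δ)

/-!
Both runs start from an empty history and, at every step, introduce the values of the same
fresh variables, numbered above the whole current history and in the order of the variables.
Hence, by induction on the step, `lam` maps the `i`-th history of the first run onto that of
the second and preserves the strict order of the `i`-th sequence numbers. Since numbers are
never changed once assigned, comparisons made at different steps can be carried out at the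
later one, so `seqNo ↦ seqNo' ∘ lam` descends to a strictly monotone map on the numbers used.
-/

open Set Function

theorem Function.exists_strictMonoOn_range_of_factorsThrough {ι α β : Type*} [LinearOrder α]
    [Preorder β] [Nonempty β] {g : ι → α} {f : ι → β} (hf : f.FactorsThrough g)
    (hlt : ∀ a b, g a < g b → f a < f b) :
    ∃ φ : α → β, (∀ a, φ (g a) = f a) ∧ BijOn φ (range g) (range f) ∧
      StrictMonoOn φ (range g) := by
  set φ := extend g f fun _ => Classical.arbitrary β
  have hφ : ∀ a, φ (g a) = f a := hf.extend_apply _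
  have hmono : StrictMonoOn φ (range g) := by
    rintro _ ⟨a, rfl⟩ _ ⟨b, rfl⟩ hab
    rw [hφ, hφ]
    exact hlt a b hab
  refine ⟨φ, hφ, ⟨?_, hmono.injOn, ?_⟩, hmono⟩
  · rintro _ ⟨a, rfl⟩
    exact ⟨a, (hφ a).symm⟩
  · rintro _ ⟨a, rfl⟩
    exact ⟨g a, ⟨a, rfl⟩, hφ a⟩

section NumberedHistory

variable {Δ Δ' : Type*}

structure IsNumberedHistory (H : ℕ → Set Δ) (sn : ℕ → Δ → ℕ) : Prop where
  mono : Monotone H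
  seqNo_succ : ∀ i, ∀ e ∈ H i, sn (i + 1) e = sn i e
  injOn : ∀ i, InjOn (sn i) (H i)

theorem IsNumberedHistory.seqNo_eq_of_le {H : ℕ → Set Δ} {sn : ℕ → Δ → ℕ}
    (hH : IsNumberedHistory H sn) {i j : ℕ} (hij : i ≤ j) {e : Δ} (he : e ∈ H i) :
    sn j e = sn i e := by
  induction j, hij using Nat.le_induction with
  | base => rfl
  | succ j hij ih => rw [hH.seqNo_succ j e (hH.mono hij he), ih]

structure SeqNoCorrespondence (lam : Δ → Δ') (H : Set Δ) (sn : Δ → ℕ) (H' : Set Δ')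
    (sn' : Δ' → ℕ) : Prop where
  image_eq : lam '' H = H'
  seqNo_lt : ∀ e ∈ H, ∀ f ∈ H, sn e < sn f → sn' (lam e) < sn' (lam f)

theorem SeqNoCorrespondence.mapsTo {lam : Δ → Δ'} {H : Set Δ} {sn : Δ → ℕ} {H' : Set Δ'}
    {sn' : Δ' → ℕ} (hc : SeqNoCorrespondence lam H sn H' sn') : MapsTo lam H H' :=
  fun _ he => hc.image_eq ▸ mem_image_of_mem lam he

variable {H : ℕ → Set Δ} {sn : ℕ → Δ → ℕ} {H' : ℕ → Set Δ'} {sn' : ℕ → Δ' → ℕ}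
  {lam : Δ → Δ'}

theorem seqNo_lt_across_stages (hH : IsNumberedHistory H sn)
    (hH' : IsNumberedHistory H' sn')
    (hc : ∀ i, SeqNoCorrespondence lam (H i) (sn i) (H' i) (sn' i)) {i j : ℕ} {e f : Δ}
    (he : e ∈ H i) (hf : f ∈ H j) (hlt : sn i e < sn j f) :
    sn' i (lam e) < sn' j (lam f) := by
  have hik := le_max_left i j
  have hjk := le_max_right i j
  rw [← hH.seqNo_eq_of_le hik he, ← hH.seqNo_eq_of_le hjk hf] at hlt
  rw [← hH'.seqNo_eq_of_le hik ((hc i).mapsTo he), ← hH'.seqNo_eq_of_le hjk ((hc j).mapsTo hf)]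
  exact (hc _).seqNo_lt e (hH.mono hik he) f (hH.mono hjk hf) hlt

theorem seqNo_eq_across_stages (hH : IsNumberedHistory H sn)
    (hH' : IsNumberedHistory H' sn')
    (hc : ∀ i, SeqNoCorrespondence lam (H i) (sn i) (H' i) (sn' i)) {i j : ℕ} {e f : Δ}
    (he : e ∈ H i) (hf : f ∈ H j) (heq : sn i e = sn j f) :
    sn' i (lam e) = sn' j (lam f) := by
  have hik := le_max_left i j
  have hjk := le_max_right i j
  rw [← hH.seqNo_eq_of_le hik he, ← hH.seqNo_eq_of_le hjk hf] at heq
  obtain rfl := hH.injOn _ (hH.mono hik he) (hH.mono hjk hf) heq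
  rw [← hH'.seqNo_eq_of_le hik ((hc i).mapsTo he), hH'.seqNo_eq_of_le hjk ((hc j).mapsTo hf)]

theorem exists_seqNo_transfer (hH : IsNumberedHistory H sn) (hH' : IsNumberedHistory H' sn')
    (hc : ∀ i, SeqNoCorrespondence lam (H i) (sn i) (H' i) (sn' i)) :
    ∃ β : ℕ → ℕ,
      (∀ i, ∀ e ∈ H i, β (sn i e) = sn' i (lam e)) ∧
      BijOn β (⋃ i, sn i '' H i) (⋃ i, sn' i '' H' i) ∧
      StrictMonoOn β (⋃ i, sn i '' H i) := by
  let g : (Σ i, H i) → ℕ := fun p => sn p.1 p.2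
  let f : (Σ i, H i) → ℕ := fun p => sn' p.1 (lam p.2)
  have hg : range g = ⋃ i, sn i '' H i := by
    simp only [g, range_sigma_eq_iUnion_range, image_eq_range]
  have hf : range f = ⋃ i, sn' i '' H' i := by
    simp only [← (hc _).image_eq, image_image]
    simp only [f, range_sigma_eq_iUnion_range, image_eq_range]
  obtain ⟨β, hβ, hbij, hmono⟩ := exists_strictMonoOn_range_of_factorsThrough (g := g) (f := f)
    (fun a b => seqNo_eq_across_stages hH hH' hc a.2.2 b.2.2)
    (fun a b => seqNo_lt_across_stages hH hH' hc a.2.2 b.2.2)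
  rw [hg, hf] at hbij
  rw [hg] at hmono
  exact ⟨β, fun i e he => hβ ⟨i, e, he⟩, hbij, hmono⟩

end NumberedHistory

section BStep

variable {Rel : Type u} {Var : Type v} {Δ : Type w} {S : Schema Rel} {b : ℕ}
  {α : DMSAction S Var Δ} {σ : Var → Δ} {I J : DBInst S Δ} {H H₁ : Set Δ} {sn sn₁ : Δ → ℕ}

theorem BStep.seqNo_fresh_lt_iff (h : BStep S b α σ I H sn J H₁ sn₁)
    (k l : Fin α.fresh.length) :
    sn₁ (σ (α.fresh.get k)) < sn₁ (σ (α.fresh.get l)) ↔ k < l := by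
  refine ⟨fun hlt => ?_, h.2.2.2.2.2 k l⟩
  by_contra! hlk
  obtain rfl | hlk := hlk.eq_or_lt
  · exact hlt.false
  · exact (h.2.2.2.2.2 l k hlk).not_gt hlt

theorem isNumberedHistory_of_bStep {I : ℕ → DBInst S Δ} {H : ℕ → Set Δ} {sn : ℕ → Δ → ℕ}
    {α : ℕ → DMSAction S Var Δ} {σ : ℕ → Var → Δ} (hH0 : H 0 = ∅)
    (hstep : ∀ i, BStep S b (α i) (σ i) (I i) (H i) (sn i) (I (i + 1)) (H (i + 1)) (sn (i + 1))) :
    IsNumberedHistory H sn where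
  mono := monotone_nat_of_le_succ fun i => (hstep i).1.2.2.2.2.2 ▸ subset_union_left
  seqNo_succ i := (hstep i).2.2.2.1
  injOn
    | 0 => hH0 ▸ injOn_empty _
    | i + 1 => (hstep i).2.2.1

theorem SeqNoCorrespondence.bStep {b' : ℕ} {σ' : Var → Δ} {I' J' : DBInst S Δ}
    {H' H₁' : Set Δ} {sn' sn₁' : Δ → ℕ} {lam : Δ → Δ}
    (hc : SeqNoCorrespondence lam H sn H' sn') (h : BStep S b α σ I H sn J H₁ sn₁)
    (h' : BStep S b' α σ' I' H' sn' J' H₁' sn₁') (hfresh : ∀ v ∈ α.fresh, lam (σ v) = σ' v) :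
    SeqNoCorrespondence lam H₁ sn₁ H₁' sn₁' := by
  have hord := h.seqNo_fresh_lt_iff
  have hord' := h'.seqNo_fresh_lt_iff
  obtain ⟨⟨-, -, -, -, -, hH₁⟩, -, -, hstab, hgt, -⟩ := h
  obtain ⟨⟨-, -, -, -, -, hH₁'⟩, -, -, hstab', hgt', -⟩ := h'
  refine ⟨?_, ?_⟩
  · rw [hH₁, hH₁', image_union, hc.image_eq, image_image]
    exact congrArg _ (image_congr hfresh)
  intro e he f hf hlt
  rw [hH₁] at he hf
  rcases he with he | ⟨v, hv, rfl⟩ <;> rcases hf with hf | ⟨w, hw, rfl⟩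
  · rw [hstab e he, hstab f hf] at hlt
    rw [hstab' _ (hc.mapsTo he), hstab' _ (hc.mapsTo hf)]
    exact hc.seqNo_lt e he f hf hlt
  · rw [hstab' _ (hc.mapsTo he), hfresh w hw]
    exact hgt' w hw _ (hc.mapsTo he)
  · exact absurd hlt (hstab f hf ▸ hgt v hv f hf).not_gt
  · obtain ⟨k, rfl⟩ := List.get_of_mem hv
    obtain ⟨l, rfl⟩ := List.get_of_mem hw
    rw [hfresh _ hv, hfresh _ hw, hord']
    exact (hord k l).1 hlt

end BStep

theorem seq_numbering_intertwined_general {Rel : Type u} {Var : Type v} {Δ : Type w}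
    {S : Schema Rel} (b : ℕ)
    (I I' : ℕ → DBInst S Δ) (H H' : ℕ → Set Δ) (sn sn' : ℕ → Δ → ℕ)
    (α α' : ℕ → DMSAction S Var Δ) (σ σ' : ℕ → Var → Δ)
    (hH0 : H 0 = ∅) (hH0' : H' 0 = ∅)
    (hstep : ∀ i, BStep S b (α i) (σ i) (I i) (H i) (sn i)
      (I (i + 1)) (H (i + 1)) (sn (i + 1)))
    (hstep' : ∀ i, BStep S b (α' i) (σ' i) (I' i) (H' i) (sn' i)
      (I' (i + 1)) (H' (i + 1)) (sn' (i + 1)))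
    (habs₁ : ∀ i, α i = α' i)
    -- `lam` is the bijection between the global active domains sending the
    -- value introduced by each fresh variable at each step of the first run to
    -- the value introduced by the same variable at the same step of the second
    (lam : Δ → Δ)
    (hlamFresh : ∀ i, ∀ v ∈ (α i).fresh, lam (σ i v) = σ' i v) :
    ∃ β : ℕ → ℕ,
      (∀ i, ∀ e ∈ H i, β (sn i e) = sn' i (lam e)) ∧
      Set.BijOn β (⋃ i, sn i '' H i) (⋃ i, sn' i '' H' i) ∧
      StrictMonoOn β (⋃ i, sn i '' H i) := by
  have hc : ∀ i, SeqNoCorrespondence lam (H i) (sn i) (H' i) (sn' i) := by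
    intro i
    induction i with
    | zero => exact ⟨by rw [hH0, hH0', image_empty], by simp [hH0]⟩
    | succ i ih => exact ih.bStep (hstep i) (habs₁ i ▸ hstep' i) (hlamFresh i)
  exact exists_seqNo_transfer (isNumberedHistory_of_bStep hH0 hstep)
    (isNumberedHistory_of_bStep hH0' hstep') hc

/-- The bijection `lam` between the global active domains of two `b`-bounded
extended runs with equal abstraction (which sends the element introduced by a
fresh variable `v` at step `i` of the first run to the element introduced by
`v` at step `i` of the second run) also intertwines the sequence numberings:
the map `β` determined by `β (seq_no_i e) = seq_no'_i (lam e)` is well-defined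
(i.e. extends to a total function satisfying these equations), bijective
between the ranges of the two numberings, and strictly monotone there. -/
theorem seq_numbering_intertwined {Rel : Type u} {Var : Type v} {Δ : Type w}
    {S : Schema Rel} (M : DMS S Var Δ) (b : ℕ)
    (hM : adom S M.I0 = ∅)
    (I I' : ℕ → DBInst S Δ) (H H' : ℕ → Set Δ) (sn sn' : ℕ → Δ → ℕ)
    (α α' : ℕ → DMSAction S Var Δ) (σ σ' : ℕ → Var → Δ)
    (hI0 : I 0 = M.I0) (hI0' : I' 0 = M.I0)
    (hH0 : H 0 = ∅) (hH0' : H' 0 = ∅)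
    (hacts : ∀ i, α i ∈ M.acts) (hacts' : ∀ i, α' i ∈ M.acts)
    (hwf : ∀ i, AddVarsOK (α i) ∧ FreshInAdd (α i))
    (hstep : ∀ i, BStep S b (α i) (σ i) (I i) (H i) (sn i)
      (I (i + 1)) (H (i + 1)) (sn (i + 1)))
    (hstep' : ∀ i, BStep S b (α' i) (σ' i) (I' i) (H' i) (sn' i)
      (I' (i + 1)) (H' (i + 1)) (sn' (i + 1)))
    (habs₁ : ∀ i, α i = α' i)
    (habs₂ : ∀ i, ∀ u ∈ (α i).params,
      recIdx (adom S (I i)) (sn i) (σ i u) =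
      recIdx (adom S (I' i)) (sn' i) (σ' i u))
    -- `lam` is the bijection between the global active domains sending the
    -- value introduced by each fresh variable at each step of the first run to
    -- the value introduced by the same variable at the same step of the second
    (lam : Δ → Δ)
    (hlam : Set.BijOn lam (⋃ i, adom S (I i)) (⋃ i, adom S (I' i)))
    (hlamFresh : ∀ i, ∀ v ∈ (α i).fresh, lam (σ i v) = σ' i v) :
    ∃ β : ℕ → ℕ,
      (∀ i, ∀ e ∈ H i, β (sn i e) = sn' i (lam e)) ∧
      Set.BijOn β (⋃ i, sn i '' H i) (⋃ i, sn' i '' H' i) ∧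
      StrictMonoOn β (⋃ i, sn i '' H i) :=
  seq_numbering_intertwined_general b I I' H H' sn sn' α α' σ σ' hH0 hH0' hstep hstep' habs₁ lam
    hlamFresh
end

section
/- In the DMS simulation of a two-counter Minsky machine using two unary relations C₁, C₂ and nullary state relations S_q, a configuration ⟨q, V⟩ of the machine is reachable from ⟨q₀, V₀⟩ (with V₀ ≡ 0) if and only if the DMS can reach a configuration ⟨I, H⟩ with S_q ∈ I, |C₁^I| = V(1), and |C₂^I| = V(2). In particular, control state q_f is reachable in the machine iff proposition S_{q_f} is reachable in the DMS. -/
universe u v w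

/-- Reachability of a configuration in the configuration graph of a DMS,
starting from the initial configuration `⟨I₀, ∅⟩`. -/
def DMSReach {Rel : Type u} {Var : Type v} {Δ : Type w} {S : Schema Rel}
    (M : DMS S Var Δ) : DBInst S Δ × Set Δ → Prop :=
  Relation.ReflTransGen
    (fun c c' => ∃ α ∈ M.acts, ∃ σ : Var → Δ, Step S α σ c.1 c.2 c'.1 c'.2)
    (M.I0, ∅)

/-! ### Two-counter Minsky machines -/

/-- Counter-machine operations. -/
inductive CMOp | inc | dec | ifz

/-- A two-counter Minsky machine: an initial state and a set of instructions. -/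
structure CM (Q : Type*) where
  q0 : Q
  prog : Set (Q × CMOp × Fin 2 × Q)

/-- One step of a two-counter machine on configurations `⟨q, V⟩`. -/
def CMStep {Q : Type*} (M : CM Q) (c c' : Q × (Fin 2 → ℕ)) : Prop :=
  ∃ i : Fin 2,
    ((c.1, CMOp.inc, i, c'.1) ∈ M.prog ∧
      c'.2 = Function.update c.2 i (c.2 i + 1)) ∨
    ((c.1, CMOp.dec, i, c'.1) ∈ M.prog ∧ 0 < c.2 i ∧
      c'.2 = Function.update c.2 i (c.2 i - 1)) ∨
    ((c.1, CMOp.ifz, i, c'.1) ∈ M.prog ∧ c.2 i = 0 ∧ c'.2 = c.2)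

/-- Reachability between configurations of a two-counter machine. -/
def CMReach {Q : Type*} (M : CM Q) : (Q × (Fin 2 → ℕ)) → (Q × (Fin 2 → ℕ)) → Prop :=
  Relation.ReflTransGen (CMStep M)

/-! ### The simulating DMS -/

/-- Schema of the simulating DMS: two unary relations `C₁, C₂` (the counters)
and one nullary relation `S_q` per control state `q`. -/
inductive RName (Q : Type*)
  | C : Fin 2 → RName Q
  | S : Q → RName Q

/-- Arities: counters are unary, state relations are nullary. -/
def arCM {Q : Type*} : RName Q → ℕ
  | RName.C _ => 1
  | RName.S _ => 0

/-- The schema of the simulating DMS. -/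
def schemaCM (Q : Type*) : Schema (RName Q) := ⟨arCM⟩

/-- The nullary fact `S_q()`. -/
def Sfact {Q : Type*} {C : Type*} (q : Q) : DBFact (schemaCM Q) C :=
  ⟨RName.S q, fun i => i.elim0⟩

/-- The unary fact `C_i(e)`. -/
def Cfact {Q : Type*} {C : Type*} (i : Fin 2) (e : C) : DBFact (schemaCM Q) C :=
  ⟨RName.C i, fun _ => e⟩

/-- Action for instruction `⟨q, inc, i, q'⟩`:
`⟨∅, {v}, S_q, {S_q}, {C_i(v), S_{q'}}⟩`. -/
def incAct {Q : Type*} (q : Q) (i : Fin 2) (q' : Q) : DMSAction (schemaCM Q) ℕ ℕ where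
  params := ∅
  fresh := [0]
  guard := fun I _ => Sfact q ∈ I
  Del := {Sfact q}
  Add := {Cfact i (0 : ℕ), Sfact q'}

/-- Action for instruction `⟨q, dec, i, q'⟩`:
`⟨{u}, ∅, S_q ∧ C_i(u), {C_i(u), S_q}, {S_{q'}}⟩`. -/
def decAct {Q : Type*} (q : Q) (i : Fin 2) (q' : Q) : DMSAction (schemaCM Q) ℕ ℕ where
  params := {0}
  fresh := []
  guard := fun I σ => Sfact q ∈ I ∧ Cfact i (σ 0) ∈ I
  Del := {Cfact i (0 : ℕ), Sfact q}
  Add := {Sfact q'}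

/-- Action for instruction `⟨q, ifz, i, q'⟩`:
`⟨∅, ∅, S_q ∧ ¬∃u.C_i(u), {S_q}, {S_{q'}}⟩`. -/
def ifzAct {Q : Type*} (q : Q) (i : Fin 2) (q' : Q) : DMSAction (schemaCM Q) ℕ ℕ where
  params := ∅
  fresh := []
  guard := fun I _ => Sfact q ∈ I ∧ ∀ e : ℕ, Cfact i e ∉ I
  Del := {Sfact q}
  Add := {Sfact q'}

/-- The DMS `S_M` simulating the two-counter machine `M`, with initial instance
`{S_{q₀}}`. -/
def dmsOfCM {Q : Type*} (M : CM Q) : DMS (schemaCM Q) ℕ ℕ where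
  I0 := {Sfact M.q0}
  acts := {a | ∃ (q : Q) (q' : Q) (i : Fin 2),
    ((q, CMOp.inc, i, q') ∈ M.prog ∧ a = incAct q i q') ∨
    ((q, CMOp.dec, i, q') ∈ M.prog ∧ a = decAct q i q') ∨
    ((q, CMOp.ifz, i, q') ∈ M.prog ∧ a = ifzAct q i q')}


/-!
A DMS configuration `⟨I, H⟩` encodes the machine configuration `⟨q, V⟩` when `S_q` is the only
state fact of `I` and `C_i^I` has exactly `V i` elements, all of them in the finite history `H`.
This relation holds initially and is a simulation in both directions, since every instruction is
matched by its action and conversely. History-freshness is what keeps increments exact: the value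
added to `C_i` lies outside `H`, hence is not already in `C_i`, so `|C_i|` grows by one.
-/

theorem Relation.ReflTransGen.exists_of_simulation {α β : Type*} {r : α → α → Prop}
    {s : β → β → Prop} {R : α → β → Prop}
    (hsim : ∀ ⦃a a' b⦄, r a a' → R a b → ∃ b', s b b' ∧ R a' b')
    {a a' : α} {b : β} (h : Relation.ReflTransGen r a a') (hab : R a b) :
    ∃ b', Relation.ReflTransGen s b b' ∧ R a' b' := by
  induction h with
  | refl => exact ⟨b, .refl, hab⟩
  | tail _ hstep ih =>
    obtain ⟨b', hb', hR⟩ := ih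
    obtain ⟨b'', hs, hR'⟩ := hsim hstep hR
    exact ⟨b'', hb'.tail hs, hR'⟩

def DMS.Trans {Rel : Type u} {Var : Type v} {Δ : Type w} {S : Schema Rel} (M : DMS S Var Δ)
    (d d' : DBInst S Δ × Set Δ) : Prop :=
  ∃ α ∈ M.acts, ∃ σ : Var → Δ, Step S α σ d.1 d.2 d'.1 d'.2

section Substitution

variable {Rel : Type u} {Var : Type v} {Δ : Type w} (S : Schema Rel) (σ : Var → Δ)

theorem substDB_insert (f : DBFact S Var) (J : DBInst S Var) :
    substDB S σ (insert f J) = insert ⟨f.1, fun k => σ (f.2 k)⟩ (substDB S σ J) :=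
  Set.image_insert_eq

theorem substDB_singleton (f : DBFact S Var) :
    substDB S σ {f} = {⟨f.1, fun k => σ (f.2 k)⟩} :=
  Set.image_singleton

end Substitution

section Facts

variable {Q : Type*} {C : Type*}

@[simp] theorem Sfact_inj {q q' : Q} :
    (Sfact q : DBFact (schemaCM Q) C) = Sfact q' ↔ q = q' := by
  refine ⟨fun h => ?_, fun h => h ▸ rfl⟩
  simpa [Sfact] using congrArg Sigma.fst h

@[simp] theorem Cfact_inj {i j : Fin 2} {e e' : C} :
    (Cfact i e : DBFact (schemaCM Q) C) = Cfact j e' ↔ i = j ∧ e = e' := by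
  refine ⟨fun h => ?_, fun ⟨hi, he⟩ => hi ▸ he ▸ rfl⟩
  obtain rfl : i = j := by simpa [Cfact] using congrArg Sigma.fst h
  exact ⟨rfl, congrFun (eq_of_heq (Sigma.mk.inj h).2) (0 : Fin 1)⟩

@[simp] theorem Sfact_ne_Cfact {q : Q} {i : Fin 2} {e : C} :
    (Sfact q : DBFact (schemaCM Q) C) ≠ Cfact i e := fun h => by
  simpa [Sfact, Cfact] using congrArg Sigma.fst h

@[simp] theorem Cfact_ne_Sfact {q : Q} {i : Fin 2} {e : C} :
    (Cfact i e : DBFact (schemaCM Q) C) ≠ Sfact q := fun h => Sfact_ne_Cfact h.symm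

@[simp] theorem subst_Sfact {Var : Type*} (σ : Var → C) (q : Q) :
    (⟨(Sfact q : DBFact (schemaCM Q) Var).1,
        fun k => σ ((Sfact q : DBFact (schemaCM Q) Var).2 k)⟩ :
      DBFact (schemaCM Q) C) = Sfact q :=
  Sigma.ext rfl (heq_of_eq (funext fun k => k.elim0))

@[simp] theorem subst_Cfact {Var : Type*} (σ : Var → C) (i : Fin 2) (x : Var) :
    (⟨(Cfact i x : DBFact (schemaCM Q) Var).1,
        fun k => σ ((Cfact i x : DBFact (schemaCM Q) Var).2 k)⟩ :
      DBFact (schemaCM Q) C) = Cfact i (σ x) :=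
  rfl

theorem mem_adom_of_Cfact_mem {I : DBInst (schemaCM Q) C} {i : Fin 2} {e : C}
    (h : Cfact i e ∈ I) : e ∈ adom (schemaCM Q) I :=
  ⟨_, h, ⟨0, Nat.one_pos⟩, rfl⟩

end Facts

section Actions

variable {Q : Type*} {q q' : Q} {i : Fin 2} {σ : ℕ → ℕ}
  {I I' : DBInst (schemaCM Q) ℕ} {H H' : Set ℕ}

theorem step_incAct_iff :
    Step (schemaCM Q) (incAct q i q') σ I H I' H' ↔
      σ 0 ∉ H ∧ Sfact q ∈ I ∧ I' = (I \ {Sfact q}) ∪ {Cfact i (σ 0), Sfact q'} ∧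
        H' = insert (σ 0) H := by
  simp [Step, incAct, freshSet, substDB_insert, substDB_singleton, Set.union_comm H]

theorem step_decAct_iff :
    Step (schemaCM Q) (decAct q i q') σ I H I' H' ↔
      Sfact q ∈ I ∧ Cfact i (σ 0) ∈ I ∧ I' = (I \ {Cfact i (σ 0), Sfact q}) ∪ {Sfact q'} ∧
        H' = H := by
  simp [Step, decAct, freshSet, substDB_insert, substDB_singleton, and_assoc]
  exact fun _ hC _ _ => mem_adom_of_Cfact_mem hC

theorem step_ifzAct_iff :
    Step (schemaCM Q) (ifzAct q i q') σ I H I' H' ↔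
      Sfact q ∈ I ∧ (∀ e, Cfact i e ∉ I) ∧ I' = (I \ {Sfact q}) ∪ {Sfact q'} ∧ H' = H := by
  simp [Step, ifzAct, freshSet, substDB_singleton, and_assoc]

end Actions

section Encoding

variable {Q : Type*}

structure Encodes (c : Q × (Fin 2 → ℕ)) (d : DBInst (schemaCM Q) ℕ × Set ℕ) : Prop where
  Sfact_mem_iff : ∀ q, Sfact q ∈ d.1 ↔ q = c.1
  encard_counter : ∀ i, (Cfact i ⁻¹' d.1).encard = c.2 i
  finite_history : d.2.Finite
  counter_subset_history : ∀ i, Cfact i ⁻¹' d.1 ⊆ d.2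

variable {c : Q × (Fin 2 → ℕ)} {d : DBInst (schemaCM Q) ℕ × Set ℕ}

theorem Encodes.ncard_counter (h : Encodes c d) (i : Fin 2) :
    (Cfact i ⁻¹' d.1).ncard = c.2 i := by
  rw [Set.ncard_def, h.encard_counter, ENat.toNat_natCast]

theorem Encodes.counter_nonempty_iff (h : Encodes c d) (i : Fin 2) :
    (Cfact i ⁻¹' d.1).Nonempty ↔ 0 < c.2 i := by
  rw [← Set.encard_pos, h.encard_counter, Nat.cast_pos]

theorem Encodes.counter_eq_empty_iff (h : Encodes c d) (i : Fin 2) :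
    Cfact i ⁻¹' d.1 = ∅ ↔ c.2 i = 0 := by
  rw [← Set.encard_eq_zero, h.encard_counter, Nat.cast_eq_zero]

variable {q : Q} {V : Fin 2 → ℕ} {I : DBInst (schemaCM Q) ℕ} {H : Set ℕ}

theorem encodes_init (q₀ : Q) : Encodes (q₀, fun _ => 0) ({Sfact q₀}, ∅) where
  Sfact_mem_iff p := by simp
  encard_counter i := by simp [Set.preimage]
  finite_history := Set.finite_empty
  counter_subset_history i := by simp [Set.preimage]

theorem Encodes.inc (h : Encodes (q, V) (I, H)) {e : ℕ} (he : e ∉ H) (i : Fin 2) (q' : Q) :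
    Encodes (q', Function.update V i (V i + 1))
      ((I \ {Sfact q}) ∪ {Cfact i e, Sfact q'}, insert e H) where
  Sfact_mem_iff p := by simp [h.Sfact_mem_iff]
  encard_counter j := by
    rcases eq_or_ne j i with rfl | hji
    · have hcounter : Cfact j ⁻¹' ((I \ {Sfact q}) ∪ {Cfact j e, Sfact q'}) =
          insert e (Cfact j ⁻¹' I) := by
        ext; simp
      have he' : e ∉ Cfact j ⁻¹' I := fun hI => he (h.counter_subset_history j hI)
      dsimp only
      rw [hcounter, Set.encard_insert_of_notMem he', h.encard_counter]
      simp
    · have hcounter : Cfact j ⁻¹' ((I \ {Sfact q}) ∪ {Cfact i e, Sfact q'}) = Cfact j ⁻¹' I := by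
        ext; simp [hji]
      dsimp only
      rw [hcounter, h.encard_counter, Function.update_of_ne hji]
  finite_history := h.finite_history.insert e
  counter_subset_history j e' := by
    simp only [Set.mem_preimage, Set.mem_union, Set.mem_sdiff, Set.mem_insert_iff,
      Set.mem_singleton_iff, Cfact_inj, Cfact_ne_Sfact, or_false]
    rintro (⟨hI, -⟩ | ⟨-, rfl⟩)
    · exact Or.inr (h.counter_subset_history j hI)
    · exact Or.inl rfl

theorem Encodes.dec (h : Encodes (q, V) (I, H)) {i : Fin 2} {e : ℕ} (he : Cfact i e ∈ I) (q' : Q) :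
    Encodes (q', Function.update V i (V i - 1))
      ((I \ {Cfact i e, Sfact q}) ∪ {Sfact q'}, H) where
  Sfact_mem_iff p := by simp [h.Sfact_mem_iff]
  encard_counter j := by
    rcases eq_or_ne j i with rfl | hji
    · have hcounter : Cfact j ⁻¹' ((I \ {Cfact j e, Sfact q}) ∪ {Sfact q'}) =
          Cfact j ⁻¹' I \ {e} := by
        ext; simp
      dsimp only
      rw [hcounter, Set.encard_sdiff_singleton_of_mem (show e ∈ Cfact j ⁻¹' I from he),
        h.encard_counter]
      simp
    · have hcounter : Cfact j ⁻¹' ((I \ {Cfact i e, Sfact q}) ∪ {Sfact q'}) = Cfact j ⁻¹' I := by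
        ext; simp [hji]
      dsimp only
      rw [hcounter, h.encard_counter, Function.update_of_ne hji]
  finite_history := h.finite_history
  counter_subset_history j e' he' := h.counter_subset_history j (by simp_all)

theorem Encodes.ifz (h : Encodes (q, V) (I, H)) (q' : Q) :
    Encodes (q', V) ((I \ {Sfact q}) ∪ {Sfact q'}, H) where
  Sfact_mem_iff p := by simp [h.Sfact_mem_iff]
  encard_counter j := by simpa [Set.preimage] using h.encard_counter j
  finite_history := h.finite_history
  counter_subset_history j e' he' := h.counter_subset_history j (by simp_all)

end Encoding

section Simulation

variable {Q : Type*} {M : CM Q}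

theorem Encodes.exists_trans_of_cmStep {c c' : Q × (Fin 2 → ℕ)} {d : DBInst (schemaCM Q) ℕ × Set ℕ}
    (hd : Encodes c d) (hstep : CMStep M c c') :
    ∃ d', (dmsOfCM M).Trans d d' ∧ Encodes c' d' := by
  obtain ⟨q, V⟩ := c
  obtain ⟨q', V'⟩ := c'
  obtain ⟨I, H⟩ := d
  have hS : Sfact q ∈ I := (hd.Sfact_mem_iff q).2 rfl
  obtain ⟨i, ⟨hprog, rfl⟩ | ⟨hprog, hpos, rfl⟩ | ⟨hprog, hzero, rfl⟩⟩ := hstep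
  · obtain ⟨e, he⟩ := hd.finite_history.infinite_compl.nonempty
    exact ⟨_, ⟨incAct q i q', ⟨q, q', i, .inl ⟨hprog, rfl⟩⟩, fun _ => e,
      step_incAct_iff.2 ⟨he, hS, rfl, rfl⟩⟩, hd.inc he i q'⟩
  · obtain ⟨e, he⟩ := (hd.counter_nonempty_iff i).2 hpos
    refine ⟨_, ?_, hd.dec he q'⟩
    exact ⟨decAct q i q', ⟨q, q', i, .inr (.inl ⟨hprog, rfl⟩)⟩, fun _ => e,
      step_decAct_iff.2 ⟨hS, he, rfl, rfl⟩⟩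
  · have hnone : ∀ e, Cfact i e ∉ I :=
      Set.eq_empty_iff_forall_notMem.1 ((hd.counter_eq_empty_iff i).2 hzero)
    refine ⟨_, ?_, hd.ifz q'⟩
    exact ⟨ifzAct q i q', ⟨q, q', i, .inr (.inr ⟨hprog, rfl⟩)⟩, id,
      step_ifzAct_iff.2 ⟨hS, hnone, rfl, rfl⟩⟩

theorem Encodes.exists_cmStep_of_trans {c : Q × (Fin 2 → ℕ)} {d d' : DBInst (schemaCM Q) ℕ × Set ℕ}
    (hd : Encodes c d) (htrans : (dmsOfCM M).Trans d d') :
    ∃ c', CMStep M c c' ∧ Encodes c' d' := by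
  obtain ⟨q, V⟩ := c
  obtain ⟨I, H⟩ := d
  obtain ⟨I', H'⟩ := d'
  obtain ⟨α, hα, σ, hstep⟩ := htrans
  dsimp only at hstep
  obtain ⟨p, p', i, ⟨hprog, rfl⟩ | ⟨hprog, rfl⟩ | ⟨hprog, rfl⟩⟩ := hα
  · obtain ⟨he, hS, rfl, rfl⟩ := step_incAct_iff.1 hstep
    obtain rfl := (hd.Sfact_mem_iff p).1 hS
    exact ⟨_, ⟨i, .inl ⟨hprog, rfl⟩⟩, hd.inc he i p'⟩
  · obtain ⟨hS, hC, rfl, rfl⟩ := step_decAct_iff.1 hstep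
    obtain rfl := (hd.Sfact_mem_iff p).1 hS
    exact ⟨_, ⟨i, .inr (.inl ⟨hprog, (hd.counter_nonempty_iff i).1 ⟨_, hC⟩, rfl⟩)⟩, hd.dec hC p'⟩
  · obtain ⟨hS, hnone, rfl, rfl⟩ := step_ifzAct_iff.1 hstep
    obtain rfl := (hd.Sfact_mem_iff p).1 hS
    have hzero : V i = 0 := (hd.counter_eq_empty_iff i).1 (Set.eq_empty_of_forall_notMem hnone)
    exact ⟨(p', V), ⟨i, .inr (.inr ⟨hprog, hzero, rfl⟩)⟩, hd.ifz p'⟩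

theorem exists_encodes_of_cmReach {c : Q × (Fin 2 → ℕ)} (h : CMReach M (M.q0, fun _ => 0) c) :
    ∃ d, DMSReach (dmsOfCM M) d ∧ Encodes c d :=
  h.exists_of_simulation (fun _ _ _ hstep hd => hd.exists_trans_of_cmStep hstep)
    (encodes_init M.q0)

theorem exists_encodes_of_dmsReach {d : DBInst (schemaCM Q) ℕ × Set ℕ}
    (h : DMSReach (dmsOfCM M) d) :
    ∃ c, CMReach M (M.q0, fun _ => 0) c ∧ Encodes c d :=
  h.exists_of_simulation (R := flip Encodes)
    (fun _ _ _ htrans hd => hd.exists_cmStep_of_trans htrans) (encodes_init M.q0)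

end Simulation

/-- Correctness of the simulation: a machine configuration `⟨q, V⟩` is
reachable from `⟨q₀, 0⟩` iff the DMS reaches a configuration `⟨I, H⟩` with
`S_q ∈ I` and `|C_i^I| = V i` for both counters. In particular, a control state
`q_f` is reachable in the machine iff the proposition `S_{q_f}` is reachable in
the DMS. -/
theorem cm_dms_simulation {Q : Type*} (M : CM Q) :
    (∀ (q : Q) (V : Fin 2 → ℕ),
      CMReach M (M.q0, fun _ => 0) (q, V) ↔
      ∃ (I : DBInst (schemaCM Q) ℕ) (H : Set ℕ),
        DMSReach (dmsOfCM M) (I, H) ∧ Sfact q ∈ I ∧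
        ∀ i : Fin 2, {e : ℕ | Cfact i e ∈ I}.ncard = V i) ∧
    (∀ qf : Q,
      (∃ V, CMReach M (M.q0, fun _ => 0) (qf, V)) ↔
      ∃ (I : DBInst (schemaCM Q) ℕ) (H : Set ℕ),
        DMSReach (dmsOfCM M) (I, H) ∧ Sfact qf ∈ I) := by
  refine ⟨fun q V => ⟨fun h => ?_, fun ⟨I, H, h, hS, hcard⟩ => ?_⟩,
    fun qf => ⟨fun ⟨V, h⟩ => ?_, fun ⟨I, H, h, hS⟩ => ?_⟩⟩
  · obtain ⟨⟨I, H⟩, hd, henc⟩ := exists_encodes_of_cmReach h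
    exact ⟨I, H, hd, (henc.Sfact_mem_iff q).2 rfl, henc.ncard_counter⟩
  · obtain ⟨⟨q₁, V₁⟩, hc, henc⟩ := exists_encodes_of_dmsReach h
    obtain rfl := (henc.Sfact_mem_iff q).1 hS
    obtain rfl : V₁ = V := funext fun i => (henc.ncard_counter i).symm.trans (hcard i)
    exact hc
  · obtain ⟨⟨I, H⟩, hd, henc⟩ := exists_encodes_of_cmReach h
    exact ⟨I, H, hd, (henc.Sfact_mem_iff qf).2 rfl⟩
  · obtain ⟨⟨q₁, V₁⟩, hc, henc⟩ := exists_encodes_of_dmsReach h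
    obtain rfl := (henc.Sfact_mem_iff qf).1 hS
    exact ⟨V₁, hc⟩
end
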